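/- Suppose ‖e^{ωL}‖_∞ ≤ 1 for all ω > 0, and f satisfies both |ξ + ω f(ξ)| ≤ ρ for all ξ ∈ [-ρ,ρ], ω ∈ (0, ω₀⁺] and |ξ - ω f(ξ)| ≤ ρ for all ξ ∈ [-ρ,ρ], ω ∈ (0, ω₀⁻]. If ‖uⁿ‖_∞ ≤ ρ and 0 < τ ≤ (2/3)·min{ω₀⁺, ω₀⁻}, then all stages of the classical four-stage fourth-order IFRK scheme u⁽¹⁾ = e^{(τ/2)L}(uⁿ + (τ/2)f(uⁿ)), u⁽²⁾ = (1/2)e^{(τ/2)L}(uⁿ - (τ/2)f(uⁿ)) + (1/2)(u⁽¹⁾ + τ f(u⁽¹⁾)), u⁽³⁾ = (1/9)e^{τL}(uⁿ - τ f(uⁿ)) + (2/9)e^{(τ/2)L}(u⁽¹⁾ - (3τ/2)f(u⁽¹⁾)) + (2/3)e^{(τ/2)L}(u⁽²⁾ + (3τ/2)f(u⁽²⁾)), u^{n+1} = (1/3)e^{(τ/2)L}(u⁽¹⁾ + (τ/2)f(u⁽¹⁾)) + (1/3)e^{(τ/2)L}u⁽²⁾ + (1/3)(u⁽³⁾ +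 (τ/2)f(u⁽³⁾)) satisfy ‖u⁽¹⁾‖_∞, ‖u⁽²⁾‖_∞, ‖u⁽³⁾‖_∞, ‖u^{n+1}‖_∞ ≤ ρ. -/

import Mathlib

open scoped BigOperators Kronecker

attribute [local instance] Matrix.linftyOpNormedRing Matrix.linftyOpNormedAlgebra

/-- The matrix `∞`-norm: maximum absolute row sum (the operator norm induced by the
vector supremum norm). -/
noncomputable def rowSumNorm {n : Type*} [Fintype n] (A : Matrix n n ℝ) : ℝ :=
  ⨆ i, ∑ j, |A i j|

/-- The logarithmic `∞`-norm `μ_∞(A) = max_i (a_ii + ∑_{j≠i} |a_ij|)`. -/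
noncomputable def logNormInf {n : Type*} [Fintype n] [DecidableEq n] (A : Matrix n n ℝ) : ℝ :=
  ⨆ i, (A i i + ∑ j ∈ Finset.univ.erase i, |A i j|)

/-! Each stage of the scheme is a convex combination of vectors built from an earlier stage `v`
by a forward or backward Euler step `v ± ω' f(v)` with `0 < ω' ≤ 3τ/2 ≤ min ω₀⁺ ω₀⁻` and/or a
factor `e^{ωL}` with `ω > 0`. The Euler steps act componentwise, so the hypotheses on `f` keep
the ball `‖·‖_∞ ≤ ρ` invariant; `e^{ωL}` is a contraction of the sup norm; and the ball is
convex. Hence the stages stay in the ball one after another. -/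

section RowSumNorm

attribute [local instance] Matrix.linftyOpNormedAddCommGroup

variable {n : Type*} [Fintype n]

theorem norm_le_rowSumNorm (A : Matrix n n ℝ) : ‖A‖ ≤ rowSumNorm A := by
  rw [Matrix.linfty_opNorm_def]
  rcases isEmpty_or_nonempty n with h | h
  · simp [rowSumNorm, Real.iSup_of_isEmpty]
  · obtain ⟨i, -, hi⟩ := Finset.exists_mem_eq_sup Finset.univ Finset.univ_nonempty
      (fun i : n => ∑ j, ‖A i j‖₊)
    rw [hi]
    push_cast
    simp only [Real.norm_eq_abs]
    exact le_ciSup (f := fun i : n => ∑ j, |A i j|) (Set.finite_range _).bddAbove i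

theorem norm_mulVec_le_of_rowSumNorm_le_one {A : Matrix n n ℝ} (hA : rowSumNorm A ≤ 1)
    (v : n → ℝ) : ‖A.mulVec v‖ ≤ ‖v‖ :=
  calc ‖A.mulVec v‖ ≤ ‖A‖ * ‖v‖ := Matrix.linfty_opNorm_mulVec A v
    _ ≤ 1 * ‖v‖ := by gcongr; exact (norm_le_rowSumNorm A).trans hA
    _ = ‖v‖ := one_mul _

end RowSumNorm

section Euler

variable {ι : Type*} [Fintype ι] {ρ : ℝ}

theorem norm_comp_le_of_abs_le {g : ℝ → ℝ} (hg : ∀ ξ, |ξ| ≤ ρ → |g ξ| ≤ ρ) {v : ι → ℝ}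
    (hv : ‖v‖ ≤ ρ) : ‖g ∘ v‖ ≤ ρ := by
  refine (pi_norm_le_iff_of_nonneg ((norm_nonneg v).trans hv)).2 fun i => ?_
  rw [Function.comp_apply, Real.norm_eq_abs]
  exact hg _ ((Real.norm_eq_abs _ ▸ norm_le_pi_norm v i).trans hv)

theorem norm_add_smul_comp_le {f : ℝ → ℝ} {ω : ℝ} (hf : ∀ ξ, |ξ| ≤ ρ → |ξ + ω * f ξ| ≤ ρ)
    {v : ι → ℝ} (hv : ‖v‖ ≤ ρ) : ‖v + ω • fun i => f (v i)‖ ≤ ρ :=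
  norm_comp_le_of_abs_le hf hv

theorem norm_sub_smul_comp_le {f : ℝ → ℝ} {ω : ℝ} (hf : ∀ ξ, |ξ| ≤ ρ → |ξ - ω * f ξ| ≤ ρ)
    {v : ι → ℝ} (hv : ‖v‖ ≤ ρ) : ‖v - ω • fun i => f (v i)‖ ≤ ρ :=
  norm_comp_le_of_abs_le hf hv

end Euler

section ConvexCombination

variable {E : Type*} [SeminormedAddCommGroup E] [NormedSpace ℝ E] {ρ a b c : ℝ} {x y z : E}

theorem norm_smul_add_smul_le (ha : 0 ≤ a) (hb : 0 ≤ b) (hab : a + b = 1)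
    (hx : ‖x‖ ≤ ρ) (hy : ‖y‖ ≤ ρ) : ‖a • x + b • y‖ ≤ ρ :=
  calc ‖a • x + b • y‖ ≤ a * ‖x‖ + b * ‖y‖ := by
        simpa only [norm_smul, Real.norm_of_nonneg ha, Real.norm_of_nonneg hb]
          using norm_add_le (a • x) (b • y)
    _ ≤ a * ρ + b * ρ := by gcongr
    _ = ρ := by rw [← add_mul, hab, one_mul]

theorem norm_smul_add_smul_add_smul_le (ha : 0 ≤ a) (hb : 0 ≤ b) (hc : 0 ≤ c)
    (habc : a + b + c = 1) (hx : ‖x‖ ≤ ρ) (hy : ‖y‖ ≤ ρ) (hz : ‖z‖ ≤ ρ) :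
    ‖a • x + b • y + c • z‖ ≤ ρ :=
  calc ‖a • x + b • y + c • z‖ ≤ a * ‖x‖ + b * ‖y‖ + c * ‖z‖ := by
        simpa only [norm_smul, Real.norm_of_nonneg ha, Real.norm_of_nonneg hb,
          Real.norm_of_nonneg hc] using norm_add₃_le (a := a • x) (b := b • y) (c := c • z)
    _ ≤ a * ρ + b * ρ + c * ρ := by gcongr
    _ = ρ := by rw [← add_mul, ← add_mul, habc, one_mul]

end ConvexCombination

theorem stmt_14_general {m : ℕ} (L : Matrix (Fin m) (Fin m) ℝ) (f : ℝ → ℝ)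
    (ρ ω₀p ω₀m τ : ℝ)
    (hL : ∀ ω : ℝ, 0 < ω → rowSumNorm (NormedSpace.exp (ω • L)) ≤ 1)
    (hfp : ∀ ξ : ℝ, |ξ| ≤ ρ → ∀ ω : ℝ, 0 < ω → ω ≤ ω₀p → |ξ + ω * f ξ| ≤ ρ)
    (hfm : ∀ ξ : ℝ, |ξ| ≤ ρ → ∀ ω : ℝ, 0 < ω → ω ≤ ω₀m → |ξ - ω * f ξ| ≤ ρ)
    (u u1 u2 u3 u' : Fin m → ℝ) (hu : ‖u‖ ≤ ρ)
    (hτ0 : 0 < τ) (hτ : τ ≤ 2 / 3 * min ω₀p ω₀m)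
    (hu1 : u1 = (NormedSpace.exp ((τ / 2) • L)).mulVec
        (u + (τ / 2) • fun i => f (u i)))
    (hu2 : u2 = (1 / 2 : ℝ) • (NormedSpace.exp ((τ / 2) • L)).mulVec
        (u - (τ / 2) • fun i => f (u i))
        + (1 / 2 : ℝ) • (u1 + τ • fun i => f (u1 i)))
    (hu3 : u3 = (1 / 9 : ℝ) • (NormedSpace.exp (τ • L)).mulVec
        (u - τ • fun i => f (u i))
        + (2 / 9 : ℝ) • (NormedSpace.exp ((τ / 2) • L)).mulVec
            (u1 - (3 * τ / 2) • fun i => f (u1 i))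
        + (2 / 3 : ℝ) • (NormedSpace.exp ((τ / 2) • L)).mulVec
            (u2 + (3 * τ / 2) • fun i => f (u2 i)))
    (hu' : u' = (1 / 3 : ℝ) • (NormedSpace.exp ((τ / 2) • L)).mulVec
        (u1 + (τ / 2) • fun i => f (u1 i))
        + (1 / 3 : ℝ) • (NormedSpace.exp ((τ / 2) • L)).mulVec u2
        + (1 / 3 : ℝ) • (u3 + (τ / 2) • fun i => f (u3 i))) :
    ‖u1‖ ≤ ρ ∧ ‖u2‖ ≤ ρ ∧ ‖u3‖ ≤ ρ ∧ ‖u'‖ ≤ ρ := by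
  have hp : 3 * τ / 2 ≤ ω₀p := by linarith [min_le_left ω₀p ω₀m]
  have hm : 3 * τ / 2 ≤ ω₀m := by linarith [min_le_right ω₀p ω₀m]
  have fwd : ∀ ω : ℝ, 0 < ω → ω ≤ 3 * τ / 2 → ∀ {v : Fin m → ℝ}, ‖v‖ ≤ ρ → ‖v + ω • fun i => f (v i)‖ ≤ ρ :=
    fun ω hω hωτ _ => norm_add_smul_comp_le fun ξ hξ => hfp ξ hξ ω hω (hωτ.trans hp)
  have bwd : ∀ ω : ℝ, 0 < ω → ω ≤ 3 * τ / 2 → ∀ {v : Fin m → ℝ}, ‖v‖ ≤ ρ → ‖v - ω • fun i => f (v i)‖ ≤ ρ :=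
    fun ω hω hωτ _ => norm_sub_smul_comp_le fun ξ hξ => hfm ξ hξ ω hω (hωτ.trans hm)
  have expL : ∀ ω : ℝ, 0 < ω → ∀ {v : Fin m → ℝ}, ‖v‖ ≤ ρ → ‖(NormedSpace.exp (ω • L)).mulVec v‖ ≤ ρ :=
    fun ω hω v hv => (norm_mulVec_le_of_rowSumNorm_le_one (hL ω hω) v).trans hv
  have hτ2 : 0 < τ / 2 := by positivity
  have h1 : ‖u1‖ ≤ ρ := hu1 ▸ expL _ hτ2 (fwd _ hτ2 (by linarith) hu)
  have h2 : ‖u2‖ ≤ ρ := hu2 ▸ norm_smul_add_smul_le (by norm_num) (by norm_num) (by norm_num)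
    (expL _ hτ2 (bwd _ hτ2 (by linarith) hu)) (fwd _ hτ0 (by linarith) h1)
  have h3 : ‖u3‖ ≤ ρ := hu3 ▸ norm_smul_add_smul_add_smul_le (by norm_num) (by norm_num)
    (by norm_num) (by norm_num) (expL _ hτ0 (bwd _ hτ0 (by linarith) hu))
    (expL _ hτ2 (bwd _ (by positivity) le_rfl h1)) (expL _ hτ2 (fwd _ (by positivity) le_rfl h2))
  have h4 : ‖u'‖ ≤ ρ := hu' ▸ norm_smul_add_smul_add_smul_le (by norm_num) (by norm_num)
    (by norm_num) (by norm_num) (expL _ hτ2 (fwd _ hτ2 (by linarith) h1)) (expL _ hτ2 h2)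
    (fwd _ hτ2 (by linarith) h3)
  exact ⟨h1, h2, h3, h4⟩

theorem stmt_14 {m : ℕ} (L : Matrix (Fin m) (Fin m) ℝ) (f : ℝ → ℝ)
    (ρ ω₀p ω₀m τ : ℝ) (hρ : 0 < ρ) (hω₀p : 0 < ω₀p) (hω₀m : 0 < ω₀m)
    (hL : ∀ ω : ℝ, 0 < ω → rowSumNorm (NormedSpace.exp (ω • L)) ≤ 1)
    (hfp : ∀ ξ : ℝ, |ξ| ≤ ρ → ∀ ω : ℝ, 0 < ω → ω ≤ ω₀p → |ξ + ω * f ξ| ≤ ρ)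
    (hfm : ∀ ξ : ℝ, |ξ| ≤ ρ → ∀ ω : ℝ, 0 < ω → ω ≤ ω₀m → |ξ - ω * f ξ| ≤ ρ)
    (u u1 u2 u3 u' : Fin m → ℝ) (hu : ‖u‖ ≤ ρ)
    (hτ0 : 0 < τ) (hτ : τ ≤ 2 / 3 * min ω₀p ω₀m)
    (hu1 : u1 = (NormedSpace.exp ((τ / 2) • L)).mulVec
        (u + (τ / 2) • fun i => f (u i)))
    (hu2 : u2 = (1 / 2 : ℝ) • (NormedSpace.exp ((τ / 2) • L)).mulVec
        (u - (τ / 2) • fun i => f (u i))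
        + (1 / 2 : ℝ) • (u1 + τ • fun i => f (u1 i)))
    (hu3 : u3 = (1 / 9 : ℝ) • (NormedSpace.exp (τ • L)).mulVec
        (u - τ • fun i => f (u i))
        + (2 / 9 : ℝ) • (NormedSpace.exp ((τ / 2) • L)).mulVec
            (u1 - (3 * τ / 2) • fun i => f (u1 i))
        + (2 / 3 : ℝ) • (NormedSpace.exp ((τ / 2) • L)).mulVec
            (u2 + (3 * τ / 2) • fun i => f (u2 i)))
    (hu' : u' = (1 / 3 : ℝ) • (NormedSpace.exp ((τ / 2) • L)).mulVec
        (u1 + (τ / 2) • fun i => f (u1 i))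
        + (1 / 3 : ℝ) • (NormedSpace.exp ((τ / 2) • L)).mulVec u2
        + (1 / 3 : ℝ) • (u3 + (τ / 2) • fun i => f (u3 i))) :
    ‖u1‖ ≤ ρ ∧ ‖u2‖ ≤ ρ ∧ ‖u3‖ ≤ ρ ∧ ‖u'‖ ≤ ρ :=
  stmt_14_general L f ρ ω₀p ω₀m τ hL hfp hfm u u1 u2 u3 u' hu hτ0 hτ hu1 hu2 hu3 hu'
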